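/- arXiv:1107.5607 — 4 statements merged into one kernel-verified Lean document; each statement's English description precedes it below -/
import Mathlib

section
/- If F = -Θ(iM + (1/2)Λ†Λ), G = -ΘΛ†S, H̄ = Λ, J = S, where Θ is Hermitian positive definite, M is Hermitian, and S is unitary, then FΘ + ΘF† + GG† = 0, G = -ΘH̄†J, and J†J = I. -/
/-!
The drift matrix is `F = -Θ K` with `K = iM + ½ Λᴴ Λ`. Since `M` is Hermitian, `iM` is
skew-Hermitian, so `K + Kᴴ = Λᴴ Λ` and `F Θ + Θ Fᴴ = -Θ (K + Kᴴ) Θ = -Θ Λᴴ Λ Θ`. Unitarity of `S`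
makes `G Gᴴ = Θ Λᴴ S Sᴴ Λ Θ = Θ Λᴴ Λ Θ`, which cancels it. The other two conditions hold by
definition of `G`, `H̄`, `J`.
-/

open Matrix
open scoped ComplexOrder

namespace Matrix

variable {l m n α : Type*}

theorem mul_mul_conjTranspose_mul_of_mul_conjTranspose_eq_one [Fintype m] [DecidableEq m]
    [Semiring α] [StarRing α]
    {A : Matrix l m α} {S : Matrix m m α} (hS : S * Sᴴ = 1) :
    A * S * (A * S)ᴴ = A * Aᴴ := by
  rw [conjTranspose_mul, Matrix.mul_assoc, ← Matrix.mul_assoc S, hS, Matrix.one_mul]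

theorem IsHermitian.mul_mul_add_mul_conjTranspose_mul [Fintype n] [Ring α] [StarRing α]
    {Θ : Matrix n n α} (hΘ : Θ.IsHermitian) (K : Matrix n n α) :
    Θ * K * Θ + Θ * (Θ * K)ᴴ = Θ * (K + Kᴴ) * Θ := by
  rw [conjTranspose_mul, hΘ.eq, Matrix.mul_add, Matrix.add_mul, Matrix.mul_assoc Θ Kᴴ]

theorem IsHermitian.I_smul_add_half_smul_add_conjTranspose {M : Matrix n n ℂ}
    (hM : M.IsHermitian) (P : Matrix n n ℂ) (hP : P.IsHermitian) :
    Complex.I • M + (1 / 2 : ℂ) • P + (Complex.I • M + (1 / 2 : ℂ) • P)ᴴ = P := by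
  rw [conjTranspose_add, conjTranspose_smul, conjTranspose_smul, hM.eq, hP.eq,
    star_div₀, star_one, star_ofNat, Complex.star_def, Complex.conj_I,
    add_add_add_comm, neg_smul, add_neg_cancel, zero_add, ← add_smul]
  norm_num

end Matrix

/-- the physical-realizability structure equations imply the algebraic
physical-realizability conditions. -/
theorem stmt_0 {n m : ℕ}
    (Θ M : Matrix (Fin n) (Fin n) ℂ) (Λ : Matrix (Fin m) (Fin n) ℂ)
    (S : Matrix (Fin m) (Fin m) ℂ)
    (F : Matrix (Fin n) (Fin n) ℂ) (G : Matrix (Fin n) (Fin m) ℂ)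
    (Hbar : Matrix (Fin m) (Fin n) ℂ) (J : Matrix (Fin m) (Fin m) ℂ)
    (hΘ : Θ.PosDef) (hM : M.IsHermitian) (hS : Sᴴ * S = 1)
    (hF : F = -(Θ * (Complex.I • M + (1 / 2 : ℂ) • (Λᴴ * Λ))))
    (hG : G = -(Θ * Λᴴ * S)) (hH : Hbar = Λ) (hJ : J = S) :
    F * Θ + Θ * Fᴴ + G * Gᴴ = 0 ∧ G = -(Θ * Hbarᴴ * J) ∧ Jᴴ * J = 1 := by
  subst F G Hbar J
  refine ⟨?_, rfl, hS⟩
  set K := Complex.I • M + (1 / 2 : ℂ) • (Λᴴ * Λ)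
  have hK : K + Kᴴ = Λᴴ * Λ :=
    hM.I_smul_add_half_smul_add_conjTranspose _ (isHermitian_conjTranspose_mul_self Λ)
  calc -(Θ * K) * Θ + Θ * (-(Θ * K))ᴴ + -(Θ * Λᴴ * S) * (-(Θ * Λᴴ * S))ᴴ
      = -(Θ * K * Θ + Θ * (Θ * K)ᴴ) + Θ * Λᴴ * S * (Θ * Λᴴ * S)ᴴ := by
        simp only [conjTranspose_neg, Matrix.neg_mul, Matrix.mul_neg, neg_neg, neg_add]
    _ = -(Θ * (Λᴴ * Λ) * Θ) + Θ * Λᴴ * (Θ * Λᴴ)ᴴ := by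
        rw [hΘ.isHermitian.mul_mul_add_mul_conjTranspose_mul, hK,
          mul_mul_conjTranspose_mul_of_mul_conjTranspose_eq_one (mul_eq_one_comm.mp hS)]
    _ = 0 := by
        rw [conjTranspose_mul, conjTranspose_conjTranspose, hΘ.isHermitian.eq]
        simp only [Matrix.mul_assoc, neg_add_cancel]
end

section
/- Conversely, if there exists Θ = Θ† > 0 with FΘ + ΘF† + GG† = 0, G = -ΘH̄†J, and J†J = I, then setting M = (i/2)(Θ⁻¹F - F†Θ⁻¹), Λ = H̄, S = J, one has M = M†, F = -Θ(iM + (1/2)Λ†Λ), G = -ΘΛ†S, and H̄ = Λ. -/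
open Matrix
open scoped ComplexOrder

/-! With `Λ = H̄` and `S = J` the relation `G = -ΘΛ†S` is the hypothesis itself. Since `J` is
unitary, `GG† = ΘΛ†ΛΘ`, so multiplying the Lyapunov equation on the right by `Θ⁻¹` gives
`ΘF†Θ⁻¹ = -F - ΘΛ†Λ`. Hence the anti-Hermitian part of `Θ⁻¹F` is `(Θ⁻¹F - F†Θ⁻¹)/2 = Θ⁻¹F + Λ†Λ/2`,
which is `F = -Θ(iM + Λ†Λ/2)` for the Hermitian matrix `M = (i/2)(Θ⁻¹F - F†Θ⁻¹)`. -/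

section

variable {n m R : Type*} [Fintype m] [DecidableEq m] [CommRing R] [StarRing R]

lemma isHermitian_smul_sub_conjTranspose {c : R} (hc : star c = -c) (X : Matrix n n R) :
    (c • (X - Xᴴ)).IsHermitian := by
  rw [IsHermitian, conjTranspose_smul, conjTranspose_sub, conjTranspose_conjTranspose, hc,
    neg_smul, ← smul_neg, neg_sub]

lemma mul_mul_conjTranspose_of_mem_unitaryGroup (A : Matrix n m R) {U : Matrix m m R}
    (hU : U ∈ unitaryGroup m R) : A * U * (A * U)ᴴ = A * Aᴴ := by
  rw [conjTranspose_mul, Matrix.mul_assoc, ← Matrix.mul_assoc U, ← star_eq_conjTranspose,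
    mem_unitaryGroup_iff.1 hU, Matrix.one_mul]

end

lemma Complex.star_I_div_two : star (Complex.I / 2) = -(Complex.I / 2) := by
  simp [Complex.conj_I, neg_div]

lemma eq_neg_mul_of_lyapunov {n : Type*} [Fintype n] [DecidableEq n]
    {F Θ Q : Matrix n n ℂ} (hΘ : IsUnit Θ.det) (h : F * Θ + Θ * Fᴴ + Θ * Q * Θ = 0) :
    F = -(Θ * (Complex.I • ((Complex.I / 2) • (Θ⁻¹ * F - Fᴴ * Θ⁻¹)) + (1 / 2 : ℂ) • Q)) := by
  have hFH : Θ * Fᴴ * Θ⁻¹ = -F - Θ * Q := by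
    have := congrArg (· * Θ⁻¹) h
    simp only [Matrix.add_mul, Matrix.mul_assoc, mul_nonsing_inv Θ hΘ, Matrix.mul_one,
      Matrix.zero_mul] at this
    rw [Matrix.mul_assoc]
    linear_combination (norm := noncomm_ring) this
  have hII : Complex.I • (Complex.I / 2) • (Θ⁻¹ * F - Fᴴ * Θ⁻¹) =
      (-1 / 2 : ℂ) • (Θ⁻¹ * F - Fᴴ * Θ⁻¹) := by
    rw [smul_smul, ← mul_div_assoc, Complex.I_mul_I]
  rw [hII, Matrix.mul_add, Matrix.mul_smul, Matrix.mul_smul, Matrix.mul_sub, ← Matrix.mul_assoc,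
    mul_nonsing_inv Θ hΘ, Matrix.one_mul, ← Matrix.mul_assoc, hFH]
  module

/-- the algebraic physical-realizability conditions imply the structure
equations with `M = (i/2)(Θ⁻¹F - F†Θ⁻¹)`, `Λ = H̄`, `S = J`. -/
theorem stmt_1 {n m : ℕ}
    (F : Matrix (Fin n) (Fin n) ℂ) (G : Matrix (Fin n) (Fin m) ℂ)
    (Hbar : Matrix (Fin m) (Fin n) ℂ) (J : Matrix (Fin m) (Fin m) ℂ)
    (Θ : Matrix (Fin n) (Fin n) ℂ) (hΘ : Θ.PosDef)
    (h1 : F * Θ + Θ * Fᴴ + G * Gᴴ = 0)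
    (h2 : G = -(Θ * Hbarᴴ * J)) (h3 : Jᴴ * J = 1) :
    ∀ M Λ S, M = (Complex.I / 2) • (Θ⁻¹ * F - Fᴴ * Θ⁻¹) → Λ = Hbar → S = J →
      M.IsHermitian ∧
      F = -(Θ * (Complex.I • M + (1 / 2 : ℂ) • (Λᴴ * Λ))) ∧
      G = -(Θ * Λᴴ * S) ∧ Hbar = Λ := by
  rintro M Λ S rfl rfl rfl
  have hGG : G * Gᴴ = Θ * (Λᴴ * Λ) * Θ := by
    rw [h2, conjTranspose_neg, Matrix.neg_mul, Matrix.mul_neg, neg_neg,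
      mul_mul_conjTranspose_of_mem_unitaryGroup _ (mem_unitaryGroup_iff'.2 h3),
      conjTranspose_mul, conjTranspose_conjTranspose, hΘ.isHermitian.eq]
    simp only [Matrix.mul_assoc]
  have hX : (Θ⁻¹ * F)ᴴ = Fᴴ * Θ⁻¹ := by rw [conjTranspose_mul, hΘ.isHermitian.inv.eq]
  refine ⟨?_, eq_neg_mul_of_lyapunov hΘ.det_pos.ne'.isUnit (hGG ▸ h1), h2, rfl⟩
  simpa only [hX] using isHermitian_smul_sub_conjTranspose Complex.star_I_div_two (Θ⁻¹ * F)
end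

section
/- Suppose F ∈ ℂ^{n×n} is Hurwitz and there exists Θ = Θ† > 0 with FΘ + ΘF† + GG† = 0, G = -ΘH̄†J, and J unitary. Then the transfer function Φ(s) = H̄(sI - F)⁻¹G + J satisfies Φ(iω)†Φ(iω) = I for all real ω. -/
open Matrix
open scoped ComplexOrder

/-!
With `A = iω I - F`, which is invertible because `F` is Hurwitz, the Lyapunov equation becomes
`A Θ + Θ Aᴴ = G Gᴴ` since `iω` is purely imaginary. Putting `X = Θ⁻¹`, the realizability
conditions turn into `Hᴴ H = Aᴴ X + Xᴴ A` and `Hᴴ J = -Xᴴ G`. Expanding `Φᴴ Φ` with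
`Φ = H A⁻¹ G + J`, the quadratic term `Gᴴ A⁻ᴴ (Aᴴ X + Xᴴ A) A⁻¹ G` cancels exactly against the two
cross terms, leaving `Jᴴ J = 1`.
-/

namespace Matrix

theorem isUnit_smul_one_sub_of_notMem_spectrum {R : Type*} [CommRing R]
    {n : Type*} [Fintype n] [DecidableEq n] {F : Matrix n n R} {s : R}
    (hs : s ∉ spectrum R F) : IsUnit (s • (1 : Matrix n n R) - F) := by
  rwa [spectrum.notMem_iff, Algebra.algebraMap_eq_smul_one] at hs

variable {R : Type*} [CommRing R] [StarRing R] {n m : Type*} [Fintype n] [DecidableEq n]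
  [Fintype m] [DecidableEq m]

theorem smul_one_sub_mul_add_mul_conjTranspose_of_star_eq_neg {s : R} (hs : star s = -s)
    (F Θ : Matrix n n R) :
    (s • 1 - F) * Θ + Θ * (s • 1 - F)ᴴ = -(F * Θ + Θ * Fᴴ) := by
  simp only [conjTranspose_sub, conjTranspose_smul, conjTranspose_one, hs, Matrix.sub_mul,
    Matrix.mul_sub, Matrix.smul_mul, Matrix.mul_smul, Matrix.mul_neg, Matrix.one_mul,
    Matrix.mul_one, neg_smul]
  abel

theorem conjTranspose_mul_self_eq_one_of_conjTranspose_mul_eq {A X : Matrix n n R}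
    {G : Matrix n m R} {H : Matrix m n R} {J : Matrix m m R} (hA : IsUnit A)
    (hHH : Hᴴ * H = Aᴴ * X + Xᴴ * A) (hHJ : Hᴴ * J = -(Xᴴ * G)) (hJ : Jᴴ * J = 1) :
    (H * A⁻¹ * G + J)ᴴ * (H * A⁻¹ * G + J) = 1 := by
  have hAB : A * A⁻¹ = 1 := mul_nonsing_inv A ((isUnit_iff_isUnit_det A).mp hA)
  have hBA : A⁻¹ᴴ * Aᴴ = 1 := by rw [← conjTranspose_mul, hAB, conjTranspose_one]
  have hJH : Jᴴ * H = -(Gᴴ * X) := by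
    simpa only [conjTranspose_mul, conjTranspose_neg, conjTranspose_conjTranspose]
      using congrArg conjTranspose hHJ
  have hquad : A⁻¹ᴴ * (Hᴴ * H) * A⁻¹ = X * A⁻¹ + A⁻¹ᴴ * Xᴴ := by
    rw [hHH, Matrix.mul_add, Matrix.add_mul, ← Matrix.mul_assoc, hBA, Matrix.mul_assoc,
      Matrix.mul_assoc, Matrix.mul_assoc, hAB, Matrix.mul_one, Matrix.one_mul]
  calc (H * A⁻¹ * G + J)ᴴ * (H * A⁻¹ * G + J)
      = Gᴴ * (A⁻¹ᴴ * (Hᴴ * H) * A⁻¹) * G + Gᴴ * A⁻¹ᴴ * (Hᴴ * J) + Jᴴ * H * (A⁻¹ * G)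
          + Jᴴ * J := by
        simp only [conjTranspose_add, conjTranspose_mul, Matrix.add_mul, Matrix.mul_add,
          Matrix.mul_assoc]
        abel
    _ = 1 := by
        rw [hquad, hHJ, hJH, hJ]
        simp only [Matrix.mul_add, Matrix.add_mul, Matrix.mul_neg, Matrix.neg_mul,
          Matrix.mul_assoc]
        abel

theorem conjTranspose_mul_self_eq_one_of_lyapunov {A Θ : Matrix n n R}
    {G : Matrix n m R} {H : Matrix m n R} {J : Matrix m m R} (hA : IsUnit A) (hΘ : IsUnit Θ)
    (hΘH : Θ.IsHermitian) (hGG : G * Gᴴ = A * Θ + Θ * Aᴴ) (hG : G = -(Θ * Hᴴ * J))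
    (hJ : Jᴴ * J = 1) :
    (H * A⁻¹ * G + J)ᴴ * (H * A⁻¹ * G + J) = 1 := by
  have hΘdet := (isUnit_iff_isUnit_det Θ).mp hΘ
  have hXH : Θ⁻¹ᴴ = Θ⁻¹ := by rw [conjTranspose_nonsing_inv, hΘH.eq]
  have hHJ : Hᴴ * J = -(Θ⁻¹ᴴ * G) := by
    rw [hXH, hG, Matrix.mul_neg, neg_neg, ← Matrix.mul_assoc, ← Matrix.mul_assoc,
      nonsing_inv_mul Θ hΘdet, Matrix.one_mul]
  have hJJ : J * Jᴴ = 1 := mul_eq_one_comm.mp hJ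
  refine conjTranspose_mul_self_eq_one_of_conjTranspose_mul_eq hA ?_ hHJ hJ
  calc Hᴴ * H = (Hᴴ * J) * (Hᴴ * J)ᴴ := by
        rw [conjTranspose_mul, conjTranspose_conjTranspose, Matrix.mul_assoc,
          ← Matrix.mul_assoc J, hJJ, Matrix.one_mul]
    _ = Θ⁻¹ * (A * Θ + Θ * Aᴴ) * Θ⁻¹ := by
        rw [hHJ, hXH, conjTranspose_neg, Matrix.neg_mul, Matrix.mul_neg, neg_neg,
          conjTranspose_mul, hXH, ← hGG]
        simp only [Matrix.mul_assoc]
    _ = Aᴴ * Θ⁻¹ + Θ⁻¹ᴴ * A := by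
        rw [hXH, Matrix.mul_add, Matrix.add_mul, Matrix.mul_assoc, Matrix.mul_assoc,
          mul_nonsing_inv Θ hΘdet, Matrix.mul_one, ← Matrix.mul_assoc, nonsing_inv_mul Θ hΘdet,
          Matrix.one_mul, add_comm]

end Matrix

/-- physical realizability (with `F` Hurwitz) implies the transfer function
`Φ(s) = H̄(sI - F)⁻¹G + J` satisfies `Φ(iω)†Φ(iω) = I` for all real `ω`. -/
theorem stmt_2 {n m : ℕ}
    (F : Matrix (Fin n) (Fin n) ℂ) (G : Matrix (Fin n) (Fin m) ℂ)
    (Hbar : Matrix (Fin m) (Fin n) ℂ) (J : Matrix (Fin m) (Fin m) ℂ)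
    (hHurwitz : ∀ μ ∈ spectrum ℂ F, μ.re < 0)
    (hpr : ∃ Θ : Matrix (Fin n) (Fin n) ℂ, Θ.PosDef ∧
      F * Θ + Θ * Fᴴ + G * Gᴴ = 0 ∧ G = -(Θ * Hbarᴴ * J) ∧ Jᴴ * J = 1) :
    ∀ ω : ℝ,
      (Hbar * ((Complex.I * (ω : ℂ)) • (1 : Matrix (Fin n) (Fin n) ℂ) - F)⁻¹ * G + J)ᴴ *
        (Hbar * ((Complex.I * (ω : ℂ)) • (1 : Matrix (Fin n) (Fin n) ℂ) - F)⁻¹ * G + J) = 1 := by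
  intro ω
  obtain ⟨Θ, hΘ, hLyap, hG, hJ⟩ := hpr
  have hskew : star (Complex.I * ω) = -(Complex.I * ω) := by simp
  have hA : IsUnit ((Complex.I * ω) • (1 : Matrix (Fin n) (Fin n) ℂ) - F) :=
    isUnit_smul_one_sub_of_notMem_spectrum fun h ↦ by simpa using hHurwitz _ h
  refine conjTranspose_mul_self_eq_one_of_lyapunov hA hΘ.isUnit hΘ.isHermitian ?_ hG hJ
  rw [smul_one_sub_mul_add_mul_conjTranspose_of_star_eq_neg hskew, eq_neg_iff_add_eq_zero,
    add_comm, hLyap]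
end

section
/- For the first-order cascade error with a single discarded cavity (n - r = 1): if K_e(iω) = J·(K̃ₙ(iω) - K̃ₙ(0))·A(iω) with J unitary, A(iω) unitary, and K̃ₙ(s) = I + HₙHₙ†/(pₙ - s), pₙ + pₙ* = -Hₙ†Hₙ, then for all ω ≥ 0 the bound is exact: ‖K_e(iω)‖ = ω·(-(pₙ + pₙ*))/(|pₙ|·|pₙ - iω|). -/
open Matrix
open scoped Matrix.Norms.L2Operator

/-!
Multiplication by unitaries preserves the L2 operator norm, so `‖K_e(iω)‖ = ‖K̃ₙ(iω) - K̃ₙ(0)‖`.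
That difference is the rank-one matrix `((pₙ - iω)⁻¹ - pₙ⁻¹) • HₙHₙ†`, whose norm is
`ω / (|pₙ| |pₙ - iω|) · ‖Hₙ‖²`, and `‖Hₙ‖² = -(pₙ + pₙ*)` by hypothesis.
-/

theorem Matrix.l2_opNorm_vecMulVec_star {𝕜 m n : Type*} [RCLike 𝕜] [Fintype m] [Fintype n]
    [DecidableEq n] (x : EuclideanSpace 𝕜 m) (y : EuclideanSpace 𝕜 n) :
    ‖vecMulVec x (star y)‖ = ‖x‖ * ‖y‖ := by
  rw [l2_opNorm_def, ← InnerProductSpace.symm_toEuclideanLin_rankOne]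
  simp only [LinearEquiv.trans_apply, LinearEquiv.apply_symm_apply]
  exact InnerProductSpace.norm_rankOne x y

theorem Matrix.l2_opNorm_vecMulVec_star_self {𝕜 n : Type*} [RCLike 𝕜] [Fintype n]
    [DecidableEq n] (v : n → 𝕜) : ‖vecMulVec v (star v)‖ = ∑ i, ‖v i‖ ^ 2 := by
  rw [← EuclideanSpace.norm_sq_eq (WithLp.toLp 2 v), sq]
  exact l2_opNorm_vecMulVec_star (WithLp.toLp 2 v) (WithLp.toLp 2 v)

theorem Complex.re_sum_star_mul_self {ι : Type*} (s : Finset ι) (v : ι → ℂ) :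
    (∑ i ∈ s, star (v i) * v i).re = ∑ i ∈ s, ‖v i‖ ^ 2 := by
  simp [Complex.re_sum, Complex.conj_mul', ← Complex.ofReal_pow]

theorem norm_inv_sub_inv {𝕜 : Type*} [NormedDivisionRing 𝕜] {a b : 𝕜} (ha : a ≠ 0)
    (hb : b ≠ 0) : ‖a⁻¹ - b⁻¹‖ = ‖b - a‖ / (‖a‖ * ‖b‖) := by
  rw [inv_sub_inv' ha hb, norm_mul, norm_mul, norm_inv, norm_inv]
  ring

theorem stmt_14_general {m : ℕ} (pn : ℂ) (Hn : Fin m → ℂ)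
    (hre : pn.re < 0)
    (hpr : pn + starRingEnd ℂ pn = -∑ l, star (Hn l) * Hn l)
    (J : Matrix (Fin m) (Fin m) ℂ) (hJ : Jᴴ * J = 1)
    (A : ℝ → Matrix (Fin m) (Fin m) ℂ) (hA : ∀ ω : ℝ, (A ω)ᴴ * A ω = 1)
    (Ktilde : ℂ → Matrix (Fin m) (Fin m) ℂ)
    (hKtilde : ∀ s, Ktilde s =
      (1 : Matrix (Fin m) (Fin m) ℂ) + (pn - s)⁻¹ • vecMulVec Hn (star Hn))
    (Ke : ℝ → Matrix (Fin m) (Fin m) ℂ)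
    (hKe : ∀ ω : ℝ, Ke ω = J * (Ktilde (Complex.I * (ω : ℂ)) - Ktilde 0) * A ω) :
    ∀ ω : ℝ, 0 ≤ ω →
      ‖Ke ω‖ = ω * (-(pn + starRingEnd ℂ pn)).re /
        (‖pn‖ * ‖pn - Complex.I * (ω : ℂ)‖) := by
  intro ω hω
  have hpn : pn ≠ 0 := by
    rintro rfl
    simp at hre
  have hpnω : pn - Complex.I * ω ≠ 0 := by
    intro h
    rw [sub_eq_zero.mp h] at hre
    simp at hre
  have hdiff : Ktilde (Complex.I * ω) - Ktilde 0 =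
      ((pn - Complex.I * ω)⁻¹ - pn⁻¹) • vecMulVec Hn (star Hn) := by
    simp only [hKtilde, sub_zero, sub_smul, add_sub_add_left_eq_sub]
  rw [hKe, CStarRing.norm_mul_mem_unitary _ (mem_unitaryGroup_iff'.mpr (hA ω)),
    CStarRing.norm_mem_unitary_mul _ (mem_unitaryGroup_iff'.mpr hJ), hdiff, norm_smul,
    norm_inv_sub_inv hpnω hpn, l2_opNorm_vecMulVec_star_self, hpr, neg_neg,
    Complex.re_sum_star_mul_self, sub_sub_cancel, norm_mul, Complex.norm_I,
    Complex.norm_real, Real.norm_of_nonneg hω]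
  ring

/-- for a single discarded cavity, the truncation error bound is exact:
if `K_e(iω) = J·(K̃ₙ(iω) - K̃ₙ(0))·A(iω)` with `J` unitary and `A(iω)` unitary, then
`‖K_e(iω)‖ = ω·(-(pₙ + pₙ*))/(|pₙ|·|pₙ - iω|)` for all `ω ≥ 0`. -/
theorem stmt_14 {m : ℕ} (pn : ℂ) (Hn : Fin m → ℂ)
    (hre : pn.re < 0) (hne : Hn ≠ 0)
    (hpr : pn + starRingEnd ℂ pn = -∑ l, star (Hn l) * Hn l)
    (J : Matrix (Fin m) (Fin m) ℂ) (hJ : Jᴴ * J = 1)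
    (A : ℝ → Matrix (Fin m) (Fin m) ℂ) (hA : ∀ ω : ℝ, (A ω)ᴴ * A ω = 1)
    (Ktilde : ℂ → Matrix (Fin m) (Fin m) ℂ)
    (hKtilde : ∀ s, Ktilde s =
      (1 : Matrix (Fin m) (Fin m) ℂ) + (pn - s)⁻¹ • vecMulVec Hn (star Hn))
    (Ke : ℝ → Matrix (Fin m) (Fin m) ℂ)
    (hKe : ∀ ω : ℝ, Ke ω = J * (Ktilde (Complex.I * (ω : ℂ)) - Ktilde 0) * A ω) :
    ∀ ω : ℝ, 0 ≤ ω →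
      ‖Ke ω‖ = ω * (-(pn + starRingEnd ℂ pn)).re /
        (‖pn‖ * ‖pn - Complex.I * (ω : ℂ)‖) :=
  stmt_14_general pn Hn hre hpr J hJ A hA Ktilde hKtilde Ke hKe
end
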